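/- arXiv:1008.2734 — 5 statements merged into one kernel-verified Lean document; each statement's English description precedes it below -/
import Mathlib

section
/- Let β : ℝ² × ℝ → ((ℝ²) →L[ℝ] ℝ) and F : ℝ² × ℝ → ℝ be continuously differentiable, and suppose that for every (x,t) ∈ ℝ² × ℝ the derivative of β at (x,t) in the direction (0,1) equals the derivative of the map x' ↦ F(x',t) at x (both as continuous linear functionals on ℝ²). Define the 1-form γ on ℝ² × ℝ by γ_{(x,t)}(u,s) = β(x,t)(u) + F(x,t)·s. Then for every point p and every u ∈ ℝ², dγ_p((u,0),(0,1)) = 0. (Thus for the contact form α = f_t dt + β_t with ∂β_t/∂t = d_S f_t, the 2-form dα has no dt-component, i.e. dα = d_S β_t = ω, so the Reeb vector field is parallel to ∂_t.) -/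
/-! For `γ = β ∘ pr₁ + F dt`, the derivative of `γ` in the direction `(u, 0)`, evaluated on
`∂_t = (0, 1)`, is `∂_u F`, while its derivative in the direction `∂_t`, evaluated on `(u, 0)`,
is `(∂_t β) u`; the compatibility `∂_t β = d_S F` says exactly that these cancel in `dγ`. -/

open ContinuousLinearMap

section

variable {𝕜 M E : Type*} [NontriviallyNormedField 𝕜]
  [NormedAddCommGroup M] [NormedSpace 𝕜 M] [NormedAddCommGroup E] [NormedSpace 𝕜 E]

theorem fderiv_partial_left_apply {F : E × 𝕜 → 𝕜} {x : E} {t : 𝕜}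
    (hF : DifferentiableAt 𝕜 F (x, t)) (u : E) :
    fderiv 𝕜 (fun x' => F (x', t)) x u = fderiv 𝕜 F (x, t) (u, 0) := by
  have h : HasFDerivAt (fun x' => F (x', t)) ((fderiv 𝕜 F (x, t)).comp (inl 𝕜 E 𝕜)) x :=
    hF.hasFDerivAt.comp x (hasFDerivAt_prodMk_left x t)
  rw [h.fderiv]
  rfl

theorem fderiv_apply_apply_of_eq_add_mul {β : M → E →L[𝕜] 𝕜} {F : M → 𝕜}
    {γ : M → E × 𝕜 →L[𝕜] 𝕜} (hγ : ∀ q u s, γ q (u, s) = β q u + F q * s) {p : M}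
    (hβ : DifferentiableAt 𝕜 β p) (hF : DifferentiableAt 𝕜 F p) (v : M) (w : E × 𝕜) :
    fderiv 𝕜 γ p v w = fderiv 𝕜 β p v w.1 + fderiv 𝕜 F p v * w.2 := by
  obtain rfl : γ = fun q => (β q).comp (fst 𝕜 E 𝕜) + F q • snd 𝕜 E 𝕜 := by
    funext q; ext <;> simp [hγ]
  have h := (hβ.hasFDerivAt.clm_comp (hasFDerivAt_const (fst 𝕜 E 𝕜) p)).fun_add
    (hF.hasFDerivAt.smul_const (snd 𝕜 E 𝕜))
  rw [h.fderiv]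
  simp [mul_comm]

end

/-- Key computation in the proof of Lemma 2.3: if `γ = β_t + F dt` is a 1-form on
`ℝ² × ℝ` with `∂β_t/∂t = d_S F`, then the 2-form `dγ` vanishes on pairs
`((u,0), (0,1))`, i.e. `dγ` has no `dt`-component. -/
theorem d_alpha_has_no_dt_component
    (β : (ℝ × ℝ) × ℝ → ((ℝ × ℝ) →L[ℝ] ℝ)) (F : (ℝ × ℝ) × ℝ → ℝ)
    (hβ : ContDiff ℝ 1 β) (hF : ContDiff ℝ 1 F)
    (hcompat : ∀ (x : ℝ × ℝ) (t : ℝ),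
      fderiv ℝ β (x, t) (((0 : ℝ × ℝ)), (1 : ℝ)) = fderiv ℝ (fun x' => F (x', t)) x)
    (γ : (ℝ × ℝ) × ℝ → (((ℝ × ℝ) × ℝ) →L[ℝ] ℝ))
    (hγ : ∀ p (u : ℝ × ℝ) (s : ℝ), γ p (u, s) = β p u + F p * s)
    (dγ : ((ℝ × ℝ) × ℝ) → ((ℝ × ℝ) × ℝ) → ((ℝ × ℝ) × ℝ) → ℝ)
    (hdγ : ∀ p u v, dγ p u v = (fderiv ℝ γ p u) v - (fderiv ℝ γ p v) u)
    (p : (ℝ × ℝ) × ℝ) (u : ℝ × ℝ) :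
    dγ p (u, (0 : ℝ)) (((0 : ℝ × ℝ)), (1 : ℝ)) = 0 := by
  obtain ⟨x, t⟩ := p
  have hβp := hβ.differentiable one_ne_zero (x, t)
  have hFp := hF.differentiable one_ne_zero (x, t)
  rw [hdγ, fderiv_apply_apply_of_eq_add_mul hγ hβp hFp,
    fderiv_apply_apply_of_eq_add_mul hγ hβp hFp, hcompat, fderiv_partial_left_apply hFp]
  simp
end

section
/- Let V be a vector space over the field 𝔽₂ = ℤ/2ℤ and let D : V → V be a locally nilpotent linear endomorphism, i.e. for every v ∈ V there exists n with Dⁿ v = 0. For every finitely supported function p : ℕ → V, the function q : ℕ → V defined by q(n) = Σ_{i=1}^{n} D^{i−1}(p(n−i)) is again finitely supported, and it satisfies q(n+1) + D(q(n)) = p(n) for all n ∈ ℕ; that is, T q = p, so the assignment p ↦ q is a right inverse to T. -/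
/-!
Peeling off the term `i = 1` gives `q (n + 1) = p n + D (q n)`, which is `T q = p` because
`2 = 0` in `𝔽₂`. If `D ^ kₘ` kills `p m`, the term of `q n` coming from `p m` vanishes as soon as
`n > m + kₘ`, so `q n = 0` beyond the largest `m + kₘ` over the support of `p`.
-/

open Finset Filter

section ShiftRightInv

variable {R M : Type*} [Semiring R] [AddCommMonoid M] [Module R M]

/-- The solution of `q (n + 1) = p n + D (q n)` with `q 0 = 0`. -/
def shiftRightInv (D : Module.End R M) (p : ℕ → M) (n : ℕ) : M :=
  ∑ i ∈ Icc 1 n, (D ^ (i - 1)) (p (n - i))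

lemma sum_Icc_one_eq_sum_range (f : ℕ → M) (n : ℕ) :
    ∑ i ∈ Icc 1 n, f i = ∑ k ∈ range n, f (k + 1) := by
  rw [range_eq_Ico, sum_Ico_add' f 0 n 1, zero_add, Ico_add_one_right_eq_Icc]

lemma shiftRightInv_eq_sum_range (D : Module.End R M) (p : ℕ → M) (n : ℕ) :
    shiftRightInv D p n = ∑ k ∈ range n, (D ^ k) (p (n - (k + 1))) := by
  simp only [shiftRightInv, sum_Icc_one_eq_sum_range, Nat.add_sub_cancel]

lemma shiftRightInv_succ (D : Module.End R M) (p : ℕ → M) (n : ℕ) :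
    shiftRightInv D p (n + 1) = p n + D (shiftRightInv D p n) := by
  rw [shiftRightInv_eq_sum_range, shiftRightInv_eq_sum_range, sum_range_succ', map_sum, add_comm]
  simp only [pow_zero, Module.End.one_apply, pow_succ', Module.End.mul_apply,
    Nat.add_sub_add_right, Nat.sub_zero]

lemma eventually_shiftRightInv_eq_zero {D : Module.End R M} (hD : ∀ v, ∃ k, (D ^ k) v = 0)
    (p : ℕ →₀ M) : ∀ᶠ n in atTop, shiftRightInv D p n = 0 := by
  choose k hk using hD
  refine eventually_gt_atTop (p.support.sup fun m ↦ m + k (p m)) |>.mono fun n hn ↦ ?_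
  refine sum_eq_zero fun i hi ↦ ?_
  by_cases hp : p (n - i) = 0
  · rw [hp, map_zero]
  · have hle : n - i + k (p (n - i)) ≤ p.support.sup fun m ↦ m + k (p m) :=
      le_sup (f := fun m ↦ m + k (p m)) (Finsupp.mem_support_iff.mpr hp)
    exact Module.End.pow_map_zero_of_le (by grind) (hk _)

end ShiftRightInv

/-- Construction of the right inverse `s₀` in the proof of Lemma 8.5 ('surgettiva'):
for a locally nilpotent endomorphism `D` of an `𝔽₂`-vector space `V` and a finitely
supported `p : ℕ → V`, the function `q(n) = ∑_{i=1}^{n} D^{i-1}(p(n-i))` is finitely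
supported and satisfies `q(n+1) + D(q(n)) = p(n)` for all `n`, i.e. `T q = p` where
`(T q)(n) = q(n+1) + D(q(n))`. -/
theorem right_inverse_of_shift_plus_nilpotent
    (V : Type*) [AddCommGroup V] [Module (ZMod 2) V]
    (D : V →ₗ[ZMod 2] V) (hD : ∀ v : V, ∃ n : ℕ, (D ^ n) v = 0)
    (p : ℕ →₀ V)
    (q : ℕ → V)
    (hq : ∀ n : ℕ, q n = ∑ i ∈ Finset.Icc 1 n, (D ^ (i - 1)) (p (n - i))) :
    (Set.Finite {n : ℕ | q n ≠ 0}) ∧ ∀ n : ℕ, q (n + 1) + D (q n) = p n := by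
  obtain rfl : q = shiftRightInv D p := funext hq
  refine ⟨?_, fun n ↦ ?_⟩
  · rw [← eventually_cofinite, Nat.cofinite_eq_atTop]
    exact eventually_shiftRightInv_eq_zero hD p
  · rw [shiftRightInv_succ, add_assoc, ZModModule.add_self, add_zero]
end

section
/- Let V be a vector space over the field 𝔽₂ = ℤ/2ℤ and let D : V → V be a locally nilpotent linear endomorphism, i.e. for every v ∈ V there exists n with Dⁿ v = 0. Then the linear operator T on the space of finitely supported functions p : ℕ → V, defined by (T p)(n) = p(n+1) + D(p(n)), is surjective. -/
/-!
The preimage of `X^m · v` is the truncated geometric series `∑ₖ X^(m+1+k) · (-D)^k v`: applying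
`T` telescopes it to `X^m · v - X^(m+n) · (-D)^n v`, and the error term vanishes once `Dⁿ v = 0`.
Since the monomials `X^m · v` span, `T` is surjective.
-/

open Finsupp

section ShiftAddEndomorphism

variable {R V : Type*} [Ring R] [AddCommGroup V] [Module R V]
  {D : Module.End R V} {T : (ℕ →₀ V) →ₗ[R] (ℕ →₀ V)}

lemma apply_single_succ (hT : ∀ (p : ℕ →₀ V) (n : ℕ), T p n = p (n + 1) + D (p n))
    (j : ℕ) (w : V) : T (single (j + 1) w) = single j w + single (j + 1) (D w) := by
  ext n
  simp only [hT, Finsupp.add_apply, single_apply, apply_ite D, map_zero, Nat.add_right_cancel_iff]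

lemma apply_sum_single_neg_pow (hT : ∀ (p : ℕ →₀ V) (n : ℕ), T p n = p (n + 1) + D (p n))
    (m n : ℕ) (v : V) :
    T (∑ k ∈ Finset.range n, single (m + 1 + k) (((-D) ^ k) v)) =
      single m v - single (m + n) (((-D) ^ n) v) := by
  have hstep : ∀ k, T (single (m + 1 + k) (((-D) ^ k) v)) =
      single (m + k) (((-D) ^ k) v) - single (m + (k + 1)) (((-D) ^ (k + 1)) v) := by
    intro k
    rw [show m + 1 + k = m + k + 1 by omega, apply_single_succ hT, pow_succ',
      Module.End.mul_apply, LinearMap.neg_apply, single_neg, sub_neg_eq_add, ← add_assoc]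
  rw [map_sum, Finset.sum_congr rfl fun k _ => hstep k,
    Finset.sum_range_sub' (fun k => single (m + k) (((-D) ^ k) v)), add_zero, pow_zero,
    Module.End.one_apply]

lemma single_mem_range_of_pow_apply_eq_zero
    (hT : ∀ (p : ℕ →₀ V) (n : ℕ), T p n = p (n + 1) + D (p n))
    (m : ℕ) {n : ℕ} {v : V} (hv : (D ^ n) v = 0) : single m v ∈ LinearMap.range T := by
  refine ⟨∑ k ∈ Finset.range n, single (m + 1 + k) (((-D) ^ k) v), ?_⟩
  rw [apply_sum_single_neg_pow hT, neg_pow, Module.End.mul_apply, hv, map_zero, single_zero,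
    sub_zero]

end ShiftAddEndomorphism

lemma Finsupp.surjective_of_single_mem_range {R M N ι : Type*} [Semiring R]
    [AddCommMonoid M] [Module R M] [AddCommMonoid N] [Module R N]
    (f : M →ₗ[R] (ι →₀ N)) (h : ∀ i x, single i x ∈ LinearMap.range f) :
    Function.Surjective f := by
  rw [← LinearMap.range_eq_top, eq_top_iff, ← iSup_lsingle_range]
  exact iSup_le fun i => LinearMap.range_le_iff_comap.mpr <|
    eq_top_iff.mpr fun x _ => h i x

/-- Lemma 8.5 ('surgettiva'): for a locally nilpotent endomorphism `D` of an
`𝔽₂`-vector space `V`, the operator `T` on finitely supported functions `ℕ → V`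
given by `(T p)(n) = p(n+1) + D(p(n))` is surjective. -/
theorem shift_plus_nilpotent_surjective
    (V : Type*) [AddCommGroup V] [Module (ZMod 2) V]
    (D : V →ₗ[ZMod 2] V) (hD : ∀ v : V, ∃ n : ℕ, (D ^ n) v = 0)
    (T : (ℕ →₀ V) →ₗ[ZMod 2] (ℕ →₀ V))
    (hT : ∀ (p : ℕ →₀ V) (n : ℕ), (T p) n = p (n + 1) + D (p n)) :
    Function.Surjective T := by
  refine surjective_of_single_mem_range T fun m v => ?_
  obtain ⟨n, hn⟩ := hD v
  exact single_mem_range_of_pow_apply_eq_zero hT m hn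
end

section
/- Let W be a vector space over the field 𝔽₂ = ℤ/2ℤ and let H : W → W be a linear map with H ∘ H = 0. Let S : W × W → W × W be the linear map S(a,b) = (H a, a + H b), and let U = range S = {(HΓ, Γ + HΓ') : Γ, Γ' ∈ W}. Then U and W × {0} (the subspace of pairs with vanishing second coordinate) are complementary subspaces of W × W: their intersection is {0} and their sum is all of W × W. -/
/-- Direct sum decomposition `E¹₀(Ê) = Im(∂̂₀₁) ⊕ (ÊCH(N,∂N) ⊕ {0})` from the final
lemma of the paper: for `H : W → W` linear over `𝔽₂` with `H² = 0` and
`S(a,b) = (Ha, a + Hb)`, the range `U` of `S` and the subspace `W × {0}` of pairs with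
vanishing second coordinate are complementary subspaces of `W × W`. -/
theorem range_S_compl_first_factor
    (W : Type*) [AddCommGroup W] [Module (ZMod 2) W]
    (H : W →ₗ[ZMod 2] W) (hH : H ∘ₗ H = 0)
    (S : W × W →ₗ[ZMod 2] W × W)
    (hS : ∀ a b : W, S (a, b) = (H a, a + H b)) :
    LinearMap.range S ⊓
        Submodule.prod (⊤ : Submodule (ZMod 2) W) (⊥ : Submodule (ZMod 2) W) = ⊥ ∧
      LinearMap.range S ⊔
        Submodule.prod (⊤ : Submodule (ZMod 2) W) (⊥ : Submodule (ZMod 2) W) = ⊤ := by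
  constructor
  · rw [Submodule.eq_bot_iff]
    rintro ⟨x, y⟩ ⟨⟨⟨a, b⟩, hab⟩, -, hy⟩
    rw [hS] at hab
    simp only [Submodule.mem_bot] at hy
    obtain ⟨hx, hy2⟩ := Prod.mk.injEq .. ▸ hab
    subst hy
    -- a + H b = 0, so a = H b (char 2: -1 = 1)
    have ha : a = H b := by
      have h := eq_neg_of_add_eq_zero_left hy2
      rw [h, neg_eq_iff_add_eq_zero, ← two_smul (ZMod 2)]
      simp [show (2 : ZMod 2) = 0 from rfl]
    have hx0 : x = 0 := by
      rw [← hx, ha]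
      have := congrFun (congrArg DFunLike.coe hH) b
      simpa using this
    simp [hx0]
  · rw [eq_top_iff]
    rintro ⟨x, y⟩ -
    have h1 : ((H y, y) : W × W) ∈ LinearMap.range S := ⟨(y, 0), by simp [hS]⟩
    have h2 : ((x - H y, 0) : W × W) ∈
        Submodule.prod (⊤ : Submodule (ZMod 2) W) (⊥ : Submodule (ZMod 2) W) := by
      simp
    have := Submodule.add_mem_sup h1 h2
    simpa using this
end

section
/- Let f, g : ℝ → ℝ be continuously differentiable and let α be the 1-form α = g(ρ)dθ + (f(ρ)/2π)dφ on ℝ³ with coordinates (ρ,φ,θ), i.e. α_{(ρ,φ,θ)}(u₁,u₂,u₃) = (f(ρ)/(2π))·u₂ + g(ρ)·u₃. Then for every point p = (ρ,φ,θ), the value of the 3-form α ∧ dα on the standard basis (e₁,e₂,e₃) of ℝ³, namely α_p(e₁)·dα_p(e₂,e₃) − α_p(e₂)·dα_p(e₁,e₃) + α_p(e₃)·dα_p(e₁,e₂), equals (f'(ρ)·g(ρ) − f(ρ)·g'(ρ))/(2π). (Consequently α is a positive contact form away from ρ = 0 exactly when f'g − fg' > 0.) -/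
/-! The form `α` depends on `ρ` only, `α = β(ρ)`, so `dα = dρ ∧ β'(ρ)`, that is
`dα(u, v) = u₁ β'(v) - v₁ β'(u)`. Since `α(e₁) = 0` and `β'` kills `e₁`, only the
last two terms of `α ∧ dα (e₁, e₂, e₃)` survive, giving `-(f/2π) g' + g f'/2π`. -/

open Real

section FormsOnFirstCoordinate

variable {E F : Type*} [NormedAddCommGroup E] [NormedSpace ℝ E]
  [NormedAddCommGroup F] [NormedSpace ℝ F]

theorem HasDerivAt.hasFDerivAt_comp_fst {β : ℝ → F} {β' : F} {x : ℝ} (h : HasDerivAt β β' x)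
    (y : E) :
    HasFDerivAt (fun q : ℝ × E => β q.1) ((ContinuousLinearMap.fst ℝ ℝ E).smulRight β') (x, y) := by
  refine (h.hasFDerivAt.comp (x, y) hasFDerivAt_fst).congr_fderiv ?_
  ext u <;> simp

theorem fderiv_comp_fst_apply_sub_apply {β : ℝ → (ℝ × E →L[ℝ] ℝ)} {β' : ℝ × E →L[ℝ] ℝ}
    {x : ℝ} (h : HasDerivAt β β' x) (y : E) (u v : ℝ × E) :
    fderiv ℝ (fun q : ℝ × E => β q.1) (x, y) u v - fderiv ℝ (fun q : ℝ × E => β q.1) (x, y) v u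
      = u.1 * β' v - v.1 * β' u := by
  simp [(h.hasFDerivAt_comp_fst y).fderiv]

end FormsOnFirstCoordinate

local notation "dφ" => ContinuousLinearMap.fst ℝ ℝ ℝ ∘L ContinuousLinearMap.snd ℝ ℝ (ℝ × ℝ)
local notation "dθ" => ContinuousLinearMap.snd ℝ ℝ ℝ ∘L ContinuousLinearMap.snd ℝ ℝ (ℝ × ℝ)

noncomputable def solidTorusForm (f g : ℝ → ℝ) (ρ : ℝ) : ℝ × ℝ × ℝ →L[ℝ] ℝ :=
  (f ρ / (2 * π)) • dφ + g ρ • dθ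

theorem hasDerivAt_solidTorusForm {f g : ℝ → ℝ} {f' g' ρ : ℝ}
    (hf : HasDerivAt f f' ρ) (hg : HasDerivAt g g' ρ) :
    HasDerivAt (solidTorusForm f g) ((f' / (2 * π)) • dφ + g' • dθ) ρ :=
  ((hf.div_const _).smul_const dφ).add (hg.smul_const dθ)

/-- Contact condition of Lemma 2.6: for the 1-form `α = g(ρ)dθ + (f(ρ)/2π)dφ` on `ℝ³`
with coordinates `(ρ, φ, θ)`, the 3-form `α ∧ dα` evaluated on the standard basis
equals `(f'g - fg')/(2π)`. -/
theorem contact_condition_solid_torus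
    (f g : ℝ → ℝ) (hf : ContDiff ℝ 1 f) (hg : ContDiff ℝ 1 g)
    (α : (ℝ × ℝ × ℝ) → ((ℝ × ℝ × ℝ) →L[ℝ] ℝ))
    (hα : ∀ p u, α p u = f p.1 / (2 * π) * u.2.1 + g p.1 * u.2.2)
    (dα : (ℝ × ℝ × ℝ) → (ℝ × ℝ × ℝ) → (ℝ × ℝ × ℝ) → ℝ)
    (hdα : ∀ p u v, dα p u v = (fderiv ℝ α p u) v - (fderiv ℝ α p v) u)
    (ρ φ θ : ℝ) :
    α (ρ, φ, θ) (1, 0, 0) * dα (ρ, φ, θ) (0, 1, 0) (0, 0, 1)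
      - α (ρ, φ, θ) (0, 1, 0) * dα (ρ, φ, θ) (1, 0, 0) (0, 0, 1)
      + α (ρ, φ, θ) (0, 0, 1) * dα (ρ, φ, θ) (1, 0, 0) (0, 1, 0)
    = (deriv f ρ * g ρ - f ρ * deriv g ρ) / (2 * π) := by
  have hα_eq : α = fun p => solidTorusForm f g p.1 :=
    funext fun p => ContinuousLinearMap.ext fun u => by simp [hα, solidTorusForm]
  have hderiv := hasDerivAt_solidTorusForm (hf.differentiable one_ne_zero ρ).hasDerivAt
    (hg.differentiable one_ne_zero ρ).hasDerivAt
  simp only [hdα, hα_eq, fderiv_comp_fst_apply_sub_apply hderiv]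
  simp [solidTorusForm]
  ring
end
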